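/- arXiv:math/0404063 — 2 statements merged into one kernel-verified Lean document; each statement's English description precedes it below -/
import Mathlib

section
/- Let K be a field, n ≥ 0 and 0 ≤ k ≤ n integers, a ∈ K with a ≠ 0, and q ∈ K such that the points a q^1, …, a q^{k+1} are pairwise distinct. Then the k-th iterated divided difference of the function x ↦ (x; q)_n at the points a q^1, …, a q^{k+1} satisfies Σ_{j=1}^{k+1} (a q^j; q)_n / ∏_{1 ≤ l ≤ k+1, l ≠ j}(a q^j − a q^l) = (−1)^k q^{k(k−1)/2} · binom_q(n, k) · (a q^{k+1}; q)_{n−k}, where binom_q(n, k) is the Gaussian binomial coefficient. -/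
/-- The Gaussian (`q`-)binomial coefficient `[n choose k]_q`, defined by the
`q`-Pascal recursion `[n+1, k+1]_q = [n, k]_q + q^(k+1) * [n, k+1]_q`. -/
def qBinom {K : Type*} [CommRing K] (q : K) : ℕ → ℕ → K
  | _, 0 => 1
  | 0, _ + 1 => 0
  | n + 1, k + 1 => qBinom q n k + q ^ (k + 1) * qBinom q n (k + 1)

section aux
variable {K : Type*} [CommRing K] (q : K)

lemma qBinom_zero : ∀ n : ℕ, qBinom q n 0 = 1
  | 0 => rfl
  | _ + 1 => rfl

lemma qBinom_eq_zero : ∀ n k : ℕ, n < k → qBinom q n k = 0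
  | 0, _ + 1, _ => rfl
  | n + 1, k + 1, h => by
    rw [qBinom, qBinom_eq_zero n k (by omega), qBinom_eq_zero n (k+1) (by omega)]
    ring

lemma qBinom_one : ∀ n : ℕ, (1 - q) * qBinom q n 1 = 1 - q ^ n
  | 0 => by simp [qBinom_eq_zero]
  | n + 1 => by
    rw [qBinom, qBinom_zero]
    linear_combination q * qBinom_one n

lemma qBinom_id : ∀ n : ℕ, ∀ k ≤ n, (1 - q ^ (k + 1)) * qBinom q (n + 1) (k + 1)
    = (1 - q ^ (n + 1 - k)) * qBinom q (n + 1) k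
  | 0, 0, _ => by norm_num [qBinom, qBinom_zero, qBinom_eq_zero]
  | n + 1, 0, _ => by
    simpa [qBinom_zero, pow_one] using qBinom_one q (n + 2)
  | n + 1, j + 1, h => by
    have ih1 := qBinom_id n j (by omega)
    have ih2 : (1 - q ^ (j + 2)) * qBinom q (n + 1) (j + 2)
        = (1 - q ^ (n - j)) * qBinom q (n + 1) (j + 1) := by
      rcases eq_or_lt_of_le h with h' | h'
      · rw [qBinom_eq_zero q (n+1) (j+2) (by omega), show n - j = 0 by omega]
        ring
      · have := qBinom_id n (j + 1) (by omega)
        rwa [show n + 1 - (j + 1) = n - j by omega] at this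
    have e1 : qBinom q (n + 2) (j + 2) = qBinom q (n+1) (j+1) + q ^ (j + 2) * qBinom q (n+1) (j+2) := rfl
    have e2 : qBinom q (n + 2) (j + 1) = qBinom q (n+1) j + q ^ (j + 1) * qBinom q (n+1) (j+1) := rfl
    rw [show n + 1 - j = (n - j) + 1 by omega] at ih1
    rw [e1, e2, show n + 1 + 1 - (j + 1) = (n - j) + 1 by omega]
    linear_combination q ^ (j + 2) * ih2 + ih1

end aux

open Finset in
lemma erase_erase_one (m j : ℕ) :
    ((Icc 1 (m+2)).erase j).erase 1 = (Icc 2 (m+2)).erase j := by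
  ext x; simp only [mem_erase, mem_Icc]; omega

open Finset in
lemma erase_erase_top (m j : ℕ) :
    ((Icc 1 (m+2)).erase j).erase (m+2) = (Icc 1 (m+1)).erase j := by
  ext x; simp only [mem_erase, mem_Icc]; omega

open Finset in
lemma dd_rec {K : Type*} [Field K] (y g : ℕ → K) (m : ℕ)
    (hy : ∀ j ∈ Icc 1 (m+2), ∀ l ∈ Icc 1 (m+2), j ≠ l → y j ≠ y l) :
    ∑ j ∈ Icc 1 (m+2), g j / ∏ l ∈ (Icc 1 (m+2)).erase j, (y j - y l)
    = ((∑ j ∈ Icc 2 (m+2), g j / ∏ l ∈ (Icc 2 (m+2)).erase j, (y j - y l))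
      - ∑ j ∈ Icc 1 (m+1), g j / ∏ l ∈ (Icc 1 (m+1)).erase j, (y j - y l))
      / (y (m+2) - y 1) := by
  have h1 : (1 : ℕ) ∈ Icc 1 (m+2) := by simp
  have htop : (m+2) ∈ Icc 1 (m+2) := by simp
  have hd : y (m+2) - y 1 ≠ 0 :=
    sub_ne_zero.2 (hy _ htop _ h1 (by omega))
  rw [eq_div_iff hd]
  have key : ∀ j ∈ Icc 1 (m+2),
      g j / (∏ l ∈ (Icc 1 (m+2)).erase j, (y j - y l)) * (y (m+2) - y 1)
      = (if j = 1 then 0 else g j / ∏ l ∈ (Icc 2 (m+2)).erase j, (y j - y l))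
        - (if j = m+2 then 0 else g j / ∏ l ∈ (Icc 1 (m+1)).erase j, (y j - y l)) := by
    intro j hj
    have hj' := Finset.mem_Icc.1 hj
    have hprodne : ∀ s : Finset ℕ, s ⊆ (Icc 1 (m+2)).erase j →
        ∏ l ∈ s, (y j - y l) ≠ 0 := by
      intro s hs
      refine Finset.prod_ne_zero_iff.2 fun l hl => ?_
      have := Finset.mem_erase.1 (hs hl)
      exact sub_ne_zero.2 (hy _ hj _ this.2 (Ne.symm this.1))
    by_cases hj1 : j = 1
    · subst hj1
      have hsplit : ∏ l ∈ (Icc 1 (m+2)).erase 1, (y 1 - y l)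
          = (y 1 - y (m+2)) * ∏ l ∈ (Icc 1 (m+1)).erase 1, (y 1 - y l) := by
        rw [← Finset.mul_prod_erase _ _ (show m+2 ∈ (Icc 1 (m+2)).erase 1 by
          simp only [mem_erase, mem_Icc]; omega), erase_erase_top]
      have hQ : ∏ l ∈ (Icc 1 (m+1)).erase 1, (y 1 - y l) ≠ 0 := by
        apply hprodne
        intro x hx
        rw [← erase_erase_top m 1] at hx
        exact Finset.mem_of_mem_erase hx
      have h2 : y 1 - y (m+2) ≠ 0 := sub_ne_zero.2 (hy _ h1 _ htop (by omega))
      rw [if_pos rfl, if_neg (show (1:ℕ) ≠ m+2 by omega), hsplit, zero_sub, ← neg_div,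
        div_mul_eq_mul_div, div_eq_div_iff (mul_ne_zero h2 hQ) hQ]
      ring
    · by_cases hjt : j = m+2
      · subst hjt
        have hsplit : ∏ l ∈ (Icc 1 (m+2)).erase (m+2), (y (m+2) - y l)
            = (y (m+2) - y 1) * ∏ l ∈ (Icc 2 (m+2)).erase (m+2), (y (m+2) - y l) := by
          rw [← Finset.mul_prod_erase _ _ (show 1 ∈ (Icc 1 (m+2)).erase (m+2) by
            simp only [mem_erase, mem_Icc]; omega), erase_erase_one]
        have hQ : ∏ l ∈ (Icc 2 (m+2)).erase (m+2), (y (m+2) - y l) ≠ 0 := by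
          apply hprodne
          intro x hx
          rw [← erase_erase_one m (m+2)] at hx
          exact Finset.mem_of_mem_erase hx
        rw [if_pos rfl, if_neg (show (m+2:ℕ) ≠ 1 by omega), hsplit, sub_zero,
          div_mul_eq_mul_div, div_eq_div_iff (mul_ne_zero hd hQ) hQ]
        ring
      · have hsplit1 : ∏ l ∈ (Icc 1 (m+2)).erase j, (y j - y l)
            = (y j - y 1) * ∏ l ∈ (Icc 2 (m+2)).erase j, (y j - y l) := by
          rw [← Finset.mul_prod_erase _ _ (show 1 ∈ (Icc 1 (m+2)).erase j by
            simp only [mem_erase, mem_Icc]; omega), erase_erase_one]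
        have hsplit2 : ∏ l ∈ (Icc 1 (m+2)).erase j, (y j - y l)
            = (y j - y (m+2)) * ∏ l ∈ (Icc 1 (m+1)).erase j, (y j - y l) := by
          rw [← Finset.mul_prod_erase _ _ (show m+2 ∈ (Icc 1 (m+2)).erase j by
            simp only [mem_erase, mem_Icc]; omega), erase_erase_top]
        have hQ2 : ∏ l ∈ (Icc 2 (m+2)).erase j, (y j - y l) ≠ 0 := by
          apply hprodne; intro x hx
          rw [← erase_erase_one m j] at hx
          exact Finset.mem_of_mem_erase hx
        have hQ1 : ∏ l ∈ (Icc 1 (m+1)).erase j, (y j - y l) ≠ 0 := by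
          apply hprodne; intro x hx
          rw [← erase_erase_top m j] at hx
          exact Finset.mem_of_mem_erase hx
        have hy1 : y j - y 1 ≠ 0 := sub_ne_zero.2 (hy _ hj _ h1 hj1)
        have h12 : (y j - y 1) * ∏ l ∈ (Icc 2 (m+2)).erase j, (y j - y l)
            = (y j - y (m+2)) * ∏ l ∈ (Icc 1 (m+1)).erase j, (y j - y l) := by
          rw [← hsplit1, hsplit2]
        rw [if_neg hj1, if_neg hjt, hsplit1, div_sub_div _ _ hQ2 hQ1,
          div_mul_eq_mul_div, div_eq_div_iff (mul_ne_zero hy1 hQ2) (mul_ne_zero hQ2 hQ1)]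
        linear_combination g j * (∏ l ∈ (Icc 2 (m+2)).erase j, (y j - y l)) * h12
  rw [Finset.sum_mul, Finset.sum_congr rfl key, Finset.sum_sub_distrib]
  congr 1
  · rw [show Icc 2 (m+2) = (Icc 1 (m+2)).erase 1 by ext x; simp only [mem_erase, mem_Icc]; omega,
      ← Finset.sum_erase (Icc 1 (m+2)) (f := fun j => if j = 1 then 0 else
        g j / ∏ l ∈ ((Icc 1 (m+2)).erase 1).erase j, (y j - y l)) (if_pos rfl)]
    exact Finset.sum_congr rfl fun x hx => if_neg (Finset.mem_erase.1 hx).1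
  · rw [show Icc 1 (m+1) = (Icc 1 (m+2)).erase (m+2) by
        ext x; simp only [mem_erase, mem_Icc]; omega,
      ← Finset.sum_erase (Icc 1 (m+2)) (f := fun j => if j = m+2 then 0 else
        g j / ∏ l ∈ ((Icc 1 (m+2)).erase (m+2)).erase j, (y j - y l)) (if_pos rfl)]
    exact Finset.sum_congr rfl fun x hx => if_neg (Finset.mem_erase.1 hx).1

/-- **Divided differences of `x ↦ (x;q)_n` at geometric nodes.**
Let `K` be a field, `0 ≤ k ≤ n`, `a ∈ K` nonzero, and `q ∈ K` such that the points
`a q^1, …, a q^(k+1)` are pairwise distinct.  Then the `k`-th iterated divided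
difference of `x ↦ (x;q)_n` at these points equals
`(-1)^k q^(k(k-1)/2) [n choose k]_q (a q^(k+1); q)_{n-k}`. -/
theorem divided_difference_qPochhammer {K : Type*} [Field K] (n k : ℕ) (hkn : k ≤ n)
    (a q : K) (ha : a ≠ 0)
    (hx : ∀ j ∈ Finset.Icc 1 (k + 1), ∀ l ∈ Finset.Icc 1 (k + 1),
      j ≠ l → a * q ^ j ≠ a * q ^ l) :
    ∑ j ∈ Finset.Icc 1 (k + 1),
        (∏ m ∈ Finset.range n, (1 - a * q ^ j * q ^ m)) /
          ∏ l ∈ (Finset.Icc 1 (k + 1)).erase j, (a * q ^ j - a * q ^ l)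
      = (-1 : K) ^ k * q ^ (k * (k - 1) / 2) * qBinom q n k *
          ∏ m ∈ Finset.range (n - k), (1 - a * q ^ (k + 1) * q ^ m) := by
  induction k generalizing a with
  | zero =>
    simp [qBinom_zero]
  | succ k ih =>
    have h2mem : (2:ℕ) ∈ Finset.Icc 1 (k+1+1) := by simp
    have h1mem : (1:ℕ) ∈ Finset.Icc 1 (k+1+1) := by simp
    have htmem : (k+2) ∈ Finset.Icc 1 (k+1+1) := by simp
    have hq0 : q ≠ 0 := by
      intro h
      exact hx 2 h2mem 1 h1mem (by omega) (by rw [h]; ring)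
    have hd : a * q ^ (k+2) - a * q ^ 1 ≠ 0 :=
      sub_ne_zero.2 (hx (k+2) htmem 1 h1mem (by omega))
    have hq1 : (1:K) - q ^ (k+1) ≠ 0 := by
      refine sub_ne_zero.2 fun h => ?_
      refine hx (k+2) htmem 1 h1mem (by omega) ?_
      rw [show (k+2) = (k+1)+1 by ring, pow_succ, ← h]
      ring
    obtain ⟨s, rfl⟩ : ∃ s, n = s + (k+1) := ⟨n - (k+1), by omega⟩
    rw [show k+1+1 = k+2 from rfl] at hx ⊢
    rw [dd_rec (fun j => a * q ^ j) (fun j => ∏ m ∈ Finset.range (s+(k+1)), (1 - a*q^j*q^m)) k hx]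
    have hshift : ∑ j ∈ Finset.Icc 2 (k+2),
          (∏ m ∈ Finset.range (s+(k+1)), (1 - a*q^j*q^m)) /
            ∏ l ∈ (Finset.Icc 2 (k+2)).erase j, (a*q^j - a*q^l)
        = ∑ j ∈ Finset.Icc 1 (k+1),
          (∏ m ∈ Finset.range (s+(k+1)), (1 - (a*q)*q^j*q^m)) /
            ∏ l ∈ (Finset.Icc 1 (k+1)).erase j, ((a*q)*q^j - (a*q)*q^l) := by
      have emb : Function.Injective (fun x : ℕ => x + 1) := add_left_injective 1
      rw [show Finset.Icc 2 (k+2) = (Finset.Icc 1 (k+1)).map ⟨fun x => x+1, emb⟩ by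
        ext x
        simp only [Finset.mem_map, Finset.mem_Icc, Function.Embedding.coeFn_mk]
        constructor
        · rintro ⟨hx1, hx2⟩; exact ⟨x - 1, ⟨by omega, by omega⟩, by omega⟩
        · rintro ⟨y, ⟨hy1, hy2⟩, rfl⟩; omega,
        Finset.sum_map]
      refine Finset.sum_congr rfl fun j hj => ?_
      simp only [Function.Embedding.coeFn_mk]
      congr 1
      · exact Finset.prod_congr rfl fun m _ => by rw [pow_succ]; ring_nf
      · rw [show ((Finset.Icc 1 (k+1)).map ⟨fun x => x+1, emb⟩).erase (j+1)
            = ((Finset.Icc 1 (k+1)).erase j).map ⟨fun x => x+1, emb⟩ by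
            rw [Finset.map_erase]; rfl, Finset.prod_map]
        refine Finset.prod_congr rfl fun l _ => ?_
        simp only [Function.Embedding.coeFn_mk]
        rw [pow_succ, pow_succ]; ring
    have hxa : ∀ j ∈ Finset.Icc 1 (k+1), ∀ l ∈ Finset.Icc 1 (k+1),
        j ≠ l → a * q ^ j ≠ a * q ^ l := by
      intro j hj l hl hne
      have hj' := Finset.mem_Icc.1 hj
      have hl' := Finset.mem_Icc.1 hl
      exact hx j (by simp only [Finset.mem_Icc]; omega) l
        (by simp only [Finset.mem_Icc]; omega) hne
    have hxaq : ∀ j ∈ Finset.Icc 1 (k+1), ∀ l ∈ Finset.Icc 1 (k+1),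
        j ≠ l → (a*q) * q ^ j ≠ (a*q) * q ^ l := by
      intro j hj l hl hne
      have hj' := Finset.mem_Icc.1 hj
      have hl' := Finset.mem_Icc.1 hl
      have := hx (j+1) (by simp only [Finset.mem_Icc]; omega) (l+1)
        (by simp only [Finset.mem_Icc]; omega) (by omega)
      intro h
      apply this
      rw [pow_succ, pow_succ]
      calc a * (q^j * q) = a * q * q^j := by ring
        _ = a * q * q^l := h
        _ = a * (q^l * q) := by ring
    have Ha := ih (by omega) a ha hxa
    have Haq := ih (by omega) (a*q) (mul_ne_zero ha hq0) hxaq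
    rw [hshift, Haq, Ha]
    rw [show s + (k+1) - k = s + 1 by omega, show s + (k+1) - (k+1) = s by omega]
    have p1 : ∏ m ∈ Finset.range (s+1), (1 - (a*q)*q^(k+1)*q^m)
        = (∏ m ∈ Finset.range s, (1 - a*q^(k+2)*q^m)) * (1 - a*q^(s+k+2)) := by
      rw [Finset.prod_range_succ]
      congr 1
      · exact Finset.prod_congr rfl fun m _ => by ring
      · ring
    have p2 : ∏ m ∈ Finset.range (s+1), (1 - a*q^(k+1)*q^m)
        = (1 - a*q^(k+1)) * ∏ m ∈ Finset.range s, (1 - a*q^(k+2)*q^m) := by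
      rw [Finset.prod_range_succ', mul_comm]
      congr 1
      · ring
      · exact Finset.prod_congr rfl fun m _ => by ring
    have hexp : (k+1) * (k+1-1) / 2 = k * (k-1) / 2 + k := by
      have h2 : (k+1) * (k+1-1) = k * (k-1) + 2 * k := by
        cases k with
        | zero => rfl
        | succ j => simp only [Nat.succ_sub_one]; ring
      rw [h2, Nat.add_mul_div_left _ _ (by norm_num : (0:ℕ) < 2)]
    rw [p1, p2, div_eq_iff hd, hexp]
    have qid := qBinom_id q (s+k) k (by omega)
    rw [show s + k + 1 - k = s + 1 by omega, show (s+k)+1 = s+(k+1) from by omega] at qid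
    set P := ∏ m ∈ Finset.range s, (1 - a*q^(k+2)*q^m) with hP
    set B := qBinom q (s+(k+1)) k with hB
    set B' := qBinom q (s+(k+1)) (k+1) with hB'
    linear_combination (-((-1:K)^k * q^(k*(k-1)/2) * P * a * q^(k+1))) * qid
end

section
/- Let p, q, a, b be complex numbers with |p| < 1, |q| < 1, |b| < 1, b ≠ 0, a ≠ 1, and suppose a b p^{j+1} ≠ 1 for all integers j ≥ 0 (so all denominators are nonzero; note (q;q)_k ≠ 0 automatically since |q| < 1). Then Gasper's bibasic identity holds: Σ_{k=0}^{∞} [ (1 − a p^k q^k)/(1 − a) ] · (a; p)_k (b^{−1}; q)_k b^k / ( (q; q)_k (a b p; p)_k ) = 0, where the series converges. -/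
/-!
With `G n = (a;p)_n (b⁻¹;q)_n bⁿ / ((q;q)_n (abp;p)_n)`, the `n`-th term is the difference
`S (n+1) - S n` for `S n = -(1 - a b pⁿ)(1 - qⁿ) G n / ((1 - a)(1 - b))`, and `S 0 = 0`.
Since `G (n+1) / G n → b` and `|b| < 1`, `G` decays geometrically, so the series converges
absolutely and its partial sums `S n` tend to `0`.
-/

open Finset Filter Topology Asymptotics

def qPochhammer {R : Type*} [CommRing R] (a q : R) (n : ℕ) : R :=
  ∏ j ∈ range n, (1 - a * q ^ j)

section Algebra

variable {K : Type*} [Field K]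

theorem qPochhammer_succ (a q : K) (n : ℕ) :
    qPochhammer a q (n + 1) = qPochhammer a q n * (1 - a * q ^ n) :=
  prod_range_succ _ _

theorem qPochhammer_ne_zero {a q : K} (h : ∀ j, a * q ^ j ≠ 1) (n : ℕ) :
    qPochhammer a q n ≠ 0 :=
  prod_ne_zero_iff.mpr fun j _ => sub_ne_zero.mpr (h j).symm

variable (p q a b : K)

def gasperCoeff (n : ℕ) : K :=
  qPochhammer a p n * qPochhammer b⁻¹ q n * b ^ n /
    (qPochhammer q q n * qPochhammer (a * b * p) p n)

def gasperTerm (n : ℕ) : K :=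
  (1 - a * p ^ n * q ^ n) / (1 - a) * gasperCoeff p q a b n

def gasperRatio (n : ℕ) : K :=
  b * ((1 - a * p ^ n) * (1 - b⁻¹ * q ^ n)) / ((1 - q * q ^ n) * (1 - a * b * p * p ^ n))

def gasperPartialSum (n : ℕ) : K :=
  -((1 - a * b * p ^ n) * (1 - q ^ n) / ((1 - a) * (1 - b)) * gasperCoeff p q a b n)

variable {p q a b}

theorem gasperCoeff_succ (hqq : ∀ j, q * q ^ j ≠ 1) (habp : ∀ j, a * b * p * p ^ j ≠ 1)
    (n : ℕ) :
    gasperCoeff p q a b (n + 1) = gasperCoeff p q a b n * gasperRatio p q a b n := by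
  have hqn := sub_ne_zero.mpr (hqq n).symm
  have hpn := sub_ne_zero.mpr (habp n).symm
  have := qPochhammer_ne_zero hqq n
  have := qPochhammer_ne_zero habp n
  simp only [gasperCoeff, gasperRatio, qPochhammer_succ, pow_succ]
  field_simp

-- The closed form comes from `(1 - a b x)(1 - y) - (b - y)(1 - a x) = (1 - b)(1 - a x y)`.
theorem gasperPartialSum_succ_sub (hb : b ≠ 0) (ha : a ≠ 1) (hb1 : b ≠ 1)
    (hqq : ∀ j, q * q ^ j ≠ 1) (habp : ∀ j, a * b * p * p ^ j ≠ 1) (n : ℕ) :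
    gasperPartialSum p q a b (n + 1) - gasperPartialSum p q a b n = gasperTerm p q a b n := by
  have hqn := sub_ne_zero.mpr (hqq n).symm
  have hpn := sub_ne_zero.mpr (habp n).symm
  have ha' := sub_ne_zero.mpr ha.symm
  have hb' := sub_ne_zero.mpr hb1.symm
  simp only [gasperPartialSum, gasperTerm, gasperCoeff_succ hqq habp, gasperRatio, pow_succ',
    ← mul_assoc]
  field_simp
  ring

theorem sum_range_gasperTerm (hb : b ≠ 0) (ha : a ≠ 1) (hb1 : b ≠ 1)
    (hqq : ∀ j, q * q ^ j ≠ 1) (habp : ∀ j, a * b * p * p ^ j ≠ 1) (n : ℕ) :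
    ∑ k ∈ range n, gasperTerm p q a b k = gasperPartialSum p q a b n := by
  rw [sum_congr rfl fun k _ => (gasperPartialSum_succ_sub hb ha hb1 hqq habp k).symm,
    sum_range_sub]
  simp [gasperPartialSum]

end Algebra

section Analysis

variable {𝕜 : Type*} [NormedField 𝕜]

theorem summable_norm_of_succ_eq_mul {f r : ℕ → 𝕜} {l : 𝕜} (hl : ‖l‖ < 1)
    (hr : Tendsto r atTop (𝓝 l)) (hf : ∀ n, f (n + 1) = f n * r n) :
    Summable fun n => ‖f n‖ := by
  obtain ⟨ρ, hlρ, hρ⟩ := exists_between hl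
  refine summable_of_ratio_norm_eventually_le hρ ?_
  filter_upwards [hr.norm.eventually (eventually_lt_nhds hlρ)] with n hn
  rw [norm_norm, norm_norm, hf, norm_mul, mul_comm]
  gcongr

theorem tendsto_one_sub_mul_pow {x : 𝕜} (hx : ‖x‖ < 1) (c : 𝕜) :
    Tendsto (fun n => 1 - c * x ^ n) atTop (𝓝 1) := by
  simpa using tendsto_const_nhds.sub ((tendsto_pow_atTop_nhds_zero_of_norm_lt_one hx).const_mul c)

variable {p q a b : 𝕜}

theorem tendsto_gasperRatio (hp : ‖p‖ < 1) (hq : ‖q‖ < 1) :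
    Tendsto (gasperRatio p q a b) atTop (𝓝 b) := by
  have hnum := ((tendsto_one_sub_mul_pow hp a).mul (tendsto_one_sub_mul_pow hq b⁻¹)).const_mul b
  have hden := (tendsto_one_sub_mul_pow hq q).mul (tendsto_one_sub_mul_pow hp (a * b * p))
  have h := hnum.div hden (by simp)
  rwa [mul_one, mul_one, div_one] at h

theorem gasperTerm_isBigO (hp : ‖p‖ < 1) (hq : ‖q‖ < 1) :
    gasperTerm p q a b =O[atTop] gasperCoeff p q a b := by
  have hpq : ‖p * q‖ < 1 := by
    rw [norm_mul]; exact mul_lt_one_of_nonneg_of_lt_one_left (norm_nonneg p) hp hq.le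
  have hc := ((tendsto_one_sub_mul_pow hpq a).div_const (1 - a)).isBigO_one 𝕜
  refine (hc.mul (isBigO_refl _ _)).congr (fun n => ?_) (fun n => one_mul _)
  simp only [gasperTerm, mul_pow, mul_assoc]

theorem tendsto_gasperPartialSum (hp : ‖p‖ < 1) (hq : ‖q‖ < 1)
    (hG : Tendsto (gasperCoeff p q a b) atTop (𝓝 0)) :
    Tendsto (gasperPartialSum p q a b) atTop (𝓝 0) := by
  have hfactor := ((tendsto_one_sub_mul_pow hp (a * b)).mul
    (tendsto_one_sub_mul_pow hq 1)).div_const ((1 - a) * (1 - b))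
  have h := (hfactor.mul hG).neg
  simp only [one_mul, mul_zero, neg_zero] at h
  exact h

end Analysis

/-- **Gasper's bibasic identity.**
Let `p, q, a, b` be complex numbers with `|p| < 1`, `|q| < 1`, `|b| < 1`, `b ≠ 0`,
`a ≠ 1`, and `a b p^(j+1) ≠ 1` for all `j ≥ 0`.  Then
`∑_{k=0}^{∞} ((1 - a p^k q^k)/(1 - a)) (a;p)_k (b⁻¹;q)_k b^k / ((q;q)_k (a b p;p)_k) = 0`,
the series being convergent with sum `0`. -/
theorem gasper_bibasic (p q a b : ℂ) (hp : ‖p‖ < 1) (hq : ‖q‖ < 1)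
    (hb : ‖b‖ < 1) (hb0 : b ≠ 0) (ha : a ≠ 1)
    (habp : ∀ j : ℕ, a * b * p ^ (j + 1) ≠ 1) :
    HasSum
      (fun k : ℕ =>
        (1 - a * p ^ k * q ^ k) / (1 - a) *
          ((∏ j ∈ range k, (1 - a * p ^ j)) * (∏ j ∈ range k, (1 - b⁻¹ * q ^ j)) * b ^ k) /
          ((∏ j ∈ range k, (1 - q * q ^ j)) * ∏ j ∈ range k, (1 - a * b * p * p ^ j)))
      0 := by
  have hqq (j : ℕ) : q * q ^ j ≠ 1 := by
    rw [← pow_succ']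
    refine ne_of_apply_ne norm (ne_of_lt ?_)
    simpa using pow_lt_one₀ (norm_nonneg q) hq j.succ_ne_zero
  have habp' (j : ℕ) : a * b * p * p ^ j ≠ 1 := by simpa [pow_succ', mul_assoc] using habp j
  have hb1 : b ≠ 1 := by rintro rfl; simp at hb
  have hcoeff := summable_norm_of_succ_eq_mul (by simpa using hb) (tendsto_gasperRatio hp hq)
    (gasperCoeff_succ hqq habp')
  have hterm : Summable (gasperTerm p q a b) :=
    summable_of_isBigO_nat hcoeff (gasperTerm_isBigO hp hq).norm_right
  convert hterm.hasSum_iff_tendsto_nat.mpr ?_ using 1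
  · exact funext fun k => mul_div_assoc _ _ _
  · simp only [sum_range_gasperTerm hb0 ha hb1 hqq habp']
    exact tendsto_gasperPartialSum hp hq
      (tendsto_zero_iff_norm_tendsto_zero.mpr hcoeff.tendsto_atTop_zero)
end
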